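/- Let R be a commutative noetherian ring, A a finite R-algebra, and V ⊆ Spec R a specialisation closed subset. For a left A-module M let Γ_V M denote the kernel of the canonical map M → ∏_{p ∉ V} M_p. Then for every injective left A-module I, the submodule Γ_V I is a direct summand of I as an A-module; in particular Γ_V I is an injective A-module. -/

import Mathlib

/-!
STATEMENT 13: for a finite algebra `A` over a commutative noetherian ring `R` and a
specialisation closed subset `V ⊆ Spec R`, the `V`-torsion submodule `Γ_V I` of an
injective left `A`-module `I` is a direct summand of `I`; in particular it is an
injective `A`-module.
-/

open CategoryTheory TensorProduct

noncomputable section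

variable (R : Type) [CommRing R] (A : Type) [Ring A] [Algebra R A]

/-- A subset `V` of the prime spectrum of `R` (realised as a set of ideals, of which
only the prime members matter) is specialisation closed. -/
def SpecializationClosed (V : Set (Ideal R)) : Prop :=
  ∀ p q : Ideal R, p.IsPrime → q.IsPrime → p ≤ q → p ∈ V → q ∈ V

/-- The `V`-torsion submodule `Γ_V M` of a module `M`: the kernel of the canonical map
`M → ∏_{p ∉ V} M_p` into the product of the localisations at primes outside `V`;
an element lies in it iff it maps to zero in every such localisation. -/
def torsionSubmodule (V : Set (Ideal R)) (M : Type) [AddCommGroup M] [Module R M]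
    [Module A M] [IsScalarTower R A M] : Submodule A M where
  carrier := {m | ∀ (p : Ideal R) (hp : p.IsPrime), p ∉ V →
    haveI := hp
    LocalizedModule.mkLinearMap p.primeCompl M m = 0}
  add_mem' := by
    intro a b ha hb p hp hpV
    haveI := hp
    rw [map_add, ha p hp hpV, hb p hp hpV, add_zero]
  zero_mem' := by
    intro p hp hpV
    haveI := hp
    rw [map_zero]
  smul_mem' := by
    intro a m hm p hp hpV
    haveI := hp
    rw [IsLocalizedModule.eq_zero_iff p.primeCompl (LocalizedModule.mkLinearMap p.primeCompl M)]
    obtain ⟨s, hs⟩ := (IsLocalizedModule.eq_zero_iff p.primeCompl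
      (LocalizedModule.mkLinearMap p.primeCompl M)).mp (hm p hp hpV)
    refine ⟨s, ?_⟩
    have hs' : (s : R) • m = 0 := hs
    have hcomm : (s : R) • (a • m) = a • ((s : R) • m) := by
      rw [← smul_assoc, Algebra.smul_def, Algebra.commutes, mul_smul, algebraMap_smul]
    show (s : R) • (a • m) = 0
    rw [hcomm, hs', smul_zero]

/-
By Baer's criterion it suffices to extend an `A`-linear map `f : J → Γ_V I` from a left ideal
`J` of `A`. As `I` is injective, `f` is `j ↦ j • m` for some `m ∈ I`; then `J m ⊆ Γ_V I` is a
finitely generated `R`-module, so its annihilator `𝔞` lies in no prime outside `V`. By Artin–Rees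
`𝔞ⁿA ∩ J ⊆ 𝔞J` for some `n`, and `f` vanishes on `𝔞J`, so `f` extends to `A/𝔞ⁿA`, i.e. it is
`j ↦ j • m'` for some `m' ∈ I` killed by `𝔞ⁿ`; such an `m'` lies in `Γ_V I`. Finally an
injective submodule is a direct summand.
-/

section

open Submodule

variable {R A}

section Torsion

variable {V : Set (Ideal R)} {M : Type} [AddCommGroup M] [Module R M] [Module A M]
  [IsScalarTower R A M]

theorem mem_torsionSubmodule_iff {x : M} :
    x ∈ torsionSubmodule R A V M ↔
      ∀ p : Ideal R, p.IsPrime → p ∉ V → ¬ (R ∙ x).annihilator ≤ p := by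
  refine forall_congr' fun p => forall_congr' fun hp => imp_congr_right fun _ => ?_
  rw [IsLocalizedModule.eq_zero_iff p.primeCompl, SetLike.not_le_iff_exists]
  exact ⟨fun ⟨s, hs⟩ => ⟨s, (mem_annihilator_span_singleton x (s : R)).mpr hs, s.2⟩,
    fun ⟨r, hr, hrp⟩ => ⟨⟨r, hrp⟩, (mem_annihilator_span_singleton x r).mp hr⟩⟩

theorem not_annihilator_le_of_le_torsionSubmodule {S : Submodule R M} (hS : S.FG)
    (hSV : S ≤ (torsionSubmodule R A V M).restrictScalars R) {p : Ideal R} (hp : p.IsPrime)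
    (hpV : p ∉ V) : ¬ S.annihilator ≤ p := by
  induction S, hS using fg_induction with
  | singleton x => exact mem_torsionSubmodule_iff.mp (hSV (mem_span_singleton_self x)) p hp hpV
  | sup N₁ N₂ _ _ ih₁ ih₂ =>
    rw [annihilator_sup, hp.inf_le, not_or]
    exact ⟨ih₁ (le_sup_left.trans hSV), ih₂ (le_sup_right.trans hSV)⟩

end Torsion

theorem exists_pow_smul_top_inf_le_ker {M P : Type*} [IsNoetherianRing R] [AddCommGroup M]
    [Module R M] [Module.Finite R M] [AddCommGroup P] [Module R P] (g : M →ₗ[R] P)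
    (N : Submodule R M) : ∃ n, (N.map g).annihilator ^ n • ⊤ ⊓ N ≤ LinearMap.ker g := by
  set a := (N.map g).annihilator
  obtain ⟨k, hk⟩ := Ideal.exists_pow_inf_eq_pow_smul a N
  refine ⟨k + 1, ?_⟩
  rw [hk (k + 1) k.le_succ, Nat.add_sub_cancel_left, pow_one]
  refine (smul_mono_right a inf_le_right).trans ?_
  rw [LinearMap.le_ker_iff_map, map_smul'', annihilator_smul]

theorem Ideal.mul_mem_smul_top {b : Ideal R} (c : A) {x : A}
    (hx : x ∈ b • (⊤ : Submodule R A)) : c * x ∈ b • (⊤ : Submodule R A) := by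
  refine smul_induction_on hx (fun r hr y _ => ?_) fun x y hx hy => ?_
  · rw [mul_smul_comm]
    exact smul_mem_smul hr trivial
  · rw [mul_add]
    exact add_mem hx hy

variable (A) in
def Ideal.leftExtension (b : Ideal R) : Ideal A where
  toAddSubmonoid := (b • ⊤ : Submodule R A).toAddSubmonoid
  smul_mem' c _ hx := Ideal.mul_mem_smul_top c hx

theorem Ideal.mem_leftExtension {b : Ideal R} {x : A} :
    x ∈ b.leftExtension A ↔ x ∈ b • (⊤ : Submodule R A) :=
  Iff.rfl

theorem Ideal.algebraMap_mem_leftExtension {b : Ideal R} {r : R} (hr : r ∈ b) :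
    algebraMap R A r ∈ b.leftExtension A := by
  rw [Ideal.mem_leftExtension, Algebra.algebraMap_eq_smul_one]
  exact smul_mem_smul hr trivial

universe v in
theorem Module.Injective.exists_comp_eq_of_ker_le {S : Type*} [Ring S] {Q X Y : Type v}
    [AddCommGroup Q] [Module S Q] [AddCommGroup X] [Module S X] [AddCommGroup Y] [Module S Y]
    (hQ : Module.Injective S Q) (u : X →ₗ[S] Y) (f : X →ₗ[S] Q)
    (h : LinearMap.ker u ≤ LinearMap.ker f) : ∃ g : Y →ₗ[S] Q, g ∘ₗ u = f := by
  have hu : Function.Injective ((LinearMap.ker u).liftQ u le_rfl) := by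
    rw [← LinearMap.ker_eq_bot]
    exact ker_liftQ_eq_bot _ _ _ le_rfl
  obtain ⟨g, hg⟩ := hQ.out _ hu ((LinearMap.ker u).liftQ f h)
  exact ⟨g, LinearMap.ext fun x => hg (Submodule.Quotient.mk x)⟩

theorem baer_torsionSubmodule [IsNoetherianRing R] [Module.Finite R A] (V : Set (Ideal R))
    {I : Type} [AddCommGroup I] [Module R I] [Module A I] [IsScalarTower R A I]
    (hI : Module.Injective A I) : Module.Baer A (torsionSubmodule R A V I) := by
  set Γ := torsionSubmodule R A V I
  intro J f
  obtain ⟨g, hg⟩ := hI.out J.subtype J.injective_subtype (Γ.subtype ∘ₗ f)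
  set S := (J.restrictScalars R).map (g.restrictScalars R)
  have hSΓ : S ≤ Γ.restrictScalars R := by
    rintro _ ⟨j, hj, rfl⟩
    exact (hg ⟨j, hj⟩).symm ▸ (f ⟨j, hj⟩).2
  obtain ⟨n, hn⟩ := exists_pow_smul_top_inf_le_ker (g.restrictScalars R) (J.restrictScalars R)
  set L := (S.annihilator ^ n).leftExtension A
  obtain ⟨h, hh⟩ := hI.exists_comp_eq_of_ker_le (L.mkQ ∘ₗ J.subtype) (Γ.subtype ∘ₗ f) <| by
    intro j hj
    have hjL : (j : A) ∈ L := (Submodule.Quotient.mk_eq_zero L).mp hj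
    have hgj : g j = 0 := hn ⟨hjL, j.2⟩
    simpa [← hg] using hgj
  set m := h (L.mkQ 1)
  have hLm : ∀ x : A, x • m = h (L.mkQ x) := fun x => by
    rw [← map_smul, ← map_smul, smul_eq_mul, mul_one]
  have hm : S.annihilator ^ n ≤ (R ∙ m).annihilator := fun r hr => by
    rw [mem_annihilator_span_singleton, ← algebraMap_smul A r m, hLm, mkQ_apply,
      (Submodule.Quotient.mk_eq_zero L).mpr (Ideal.algebraMap_mem_leftExtension hr), map_zero]
  have hmΓ : m ∈ Γ := mem_torsionSubmodule_iff.mpr fun p hp hpV hle =>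
    not_annihilator_le_of_le_torsionSubmodule ((IsNoetherian.noetherian _).map _) hSΓ hp hpV
      (hp.le_of_pow_le (hm.trans hle))
  refine ⟨LinearMap.toSpanSingleton A _ ⟨m, hmΓ⟩, fun x hx => Subtype.ext ?_⟩
  simpa [hLm] using LinearMap.congr_fun hh ⟨x, hx⟩

theorem Submodule.exists_isCompl_of_injective {S M : Type*} [Ring S] [AddCommGroup M]
    [Module S M] (N : Submodule S M) (hN : Module.Injective S N) : ∃ N', IsCompl N N' := by
  obtain ⟨π, hπ⟩ := hN.out N.subtype N.injective_subtype LinearMap.id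
  exact ⟨_, LinearMap.isCompl_of_proj hπ⟩

end

theorem torsionSubmodule_injective_direct_summand
    [IsNoetherianRing R] [Module.Finite R A]
    (V : Set (Ideal R))
    (I : Type) [AddCommGroup I] [Module R I] [Module A I] [IsScalarTower R A I]
    (hI : Module.Injective A I) :
    (∃ N : Submodule A I, IsCompl (torsionSubmodule R A V I) N) ∧
    Module.Injective A (torsionSubmodule R A V I) := by
  have hΓ : Module.Injective A (torsionSubmodule R A V I) := (baer_torsionSubmodule V hI).injective
  exact ⟨(torsionSubmodule R A V I).exists_isCompl_of_injective hΓ, hΓ⟩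

end
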